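/- arXiv:1902.04467 — 2 statements merged into one kernel-verified Lean document; each statement's English description precedes it below -/
import Mathlib

section
/- The commutator f ↦ (1/m₁^f(·))·(i A_{m₁^f} f) − i A_{m₁^f}((1/m₁^f(·))·f), where (1/m₁^f(·)) denotes multiplication by e^{−n}, is defined on finitely supported functions on ℕ and extends to a compact operator on ℓ²(ℕ, m₁^f). -/
noncomputable section

open Complex

/-- `(A_ℕ f)(n) = (i/2)·((n − 1/2)·f(n−1) − (n + 1/2)·f(n+1))`, with `f(−1) = 0`. -/
def aN (f : ℕ → ℂ) : ℕ → ℂ := fun n =>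
  (I / 2) * (((n : ℂ) - 1 / 2) * (if n = 0 then 0 else f (n - 1))
    - ((n : ℂ) + 1 / 2) * f (n + 1))

/-- The gauge transform `T_{m→m'} f = (x ↦ √(m(x)/m'(x))·f(x))`. -/
def Tw {V : Type*} (m m' : V → ℝ) (f : V → ℂ) : V → ℂ :=
  fun x => (Real.sqrt (m x / m' x) : ℂ) * f x

/-- Weight of the funnel half-line: `m₁^f(n) = eⁿ`. -/
def m1F : ℕ → ℝ := fun n => Real.exp n

/-- `A_{m₁^f} := T_{1→m₁^f} ∘ A_ℕ ∘ T_{1→m₁^f}⁻¹`. -/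
def aM1F (f : ℕ → ℂ) : ℕ → ℂ :=
  Tw (fun _ => 1) m1F (aN (Tw m1F (fun _ => 1) f))

/-- The commutator `[1/m₁^f(·), iA_{m₁^f}]` on finitely supported functions:
`f ↦ (1/m₁^f(·))·(iA_{m₁^f} f) − iA_{m₁^f}((1/m₁^f(·))·f)`. -/
def commOp (f : ℕ → ℂ) : ℕ → ℂ := fun n =>
  ((Real.exp (-(n : ℝ)) : ℝ) : ℂ) * (I * aM1F f n)
    - I * aM1F (fun k => ((Real.exp (-(k : ℝ)) : ℝ) : ℂ) * f k) n

/-- The standard (unweighted) `ℓ²` space over `V`. -/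
abbrev L2 (V : Type*) := lp (fun _ : V => ℂ) 2

/-- The isometry `ℓ²(V,m) → ℓ²(V)`, `f ↦ √m·f`. -/
def emb {V : Type*} (m : V → ℝ) (f : V → ℂ) : V → ℂ :=
  fun v => (Real.sqrt (m v) : ℂ) * f v

/-- The inverse isometry `ℓ²(V) → ℓ²(V,m)`, `g ↦ g/√m`. -/
def unemb {V : Type*} (m : V → ℝ) (g : V → ℂ) : V → ℂ :=
  fun v => g v / (Real.sqrt (m v) : ℂ)

/-!
In the coordinates `g = √(m₁^f)·f` of the unweighted `ℓ²(ℕ)` the gauge transforms cancel, and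
since `iA_ℕ` is a real Jacobi matrix the commutator becomes `g ↦ α·(g ∘ pred) + β·(g ∘ succ)` with
`α(n) = (n − ½)(e^{1−n} − e^{−n})/2` and `β(n) = (n + ½)(e^{−n} − e^{−n−1})/2`, both `O(n e^{−n})`,
hence in `ℓ²`. A weighted composition `u ↦ c·(u ∘ k)` is bounded by `‖c‖₂ ‖u‖_∞ ≤ ‖c‖₂ ‖u‖₂`,
so it depends continuously on `c`; for `c` a basis vector it has rank one, and approximating
`c` by its finite truncations exhibits it as a norm limit of finite-rank operators.
-/

section WeightedComposition

variable {𝕜 : Type*} [RCLike 𝕜] {ι κ : Type*} (k : ι → κ)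

lemma norm_mul_comp_apply_le (c : lp (fun _ : ι => 𝕜) 2) (u : lp (fun _ : κ => 𝕜) 2) (i : ι) :
    ‖c i * u (k i)‖ ≤ ‖((‖u‖ : 𝕜) • c) i‖ := by
  rw [lp.coeFn_smul, Pi.smul_apply, norm_mul, norm_smul, RCLike.norm_ofReal, abs_norm, mul_comm]
  gcongr
  exact lp.norm_apply_le_norm two_ne_zero u (k i)

lemma memℓp_mul_comp (c : lp (fun _ : ι => 𝕜) 2) (u : lp (fun _ : κ => 𝕜) 2) :
    Memℓp (fun i => c i * u (k i)) 2 :=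
  (lp.memℓp ((‖u‖ : 𝕜) • c)).mono' (norm_mul_comp_apply_le k c u)

def weightedComp :
    lp (fun _ : ι => 𝕜) 2 →L[𝕜] lp (fun _ : κ => 𝕜) 2 →L[𝕜] lp (fun _ : ι => 𝕜) 2 :=
  LinearMap.mkContinuous₂
    (LinearMap.mk₂ 𝕜 (fun c u => ⟨fun i => c i * u (k i), memℓp_mul_comp k c u⟩)
      (fun _ _ _ => lp.ext <| funext fun _ => add_mul _ _ _)
      (fun _ _ _ => lp.ext <| funext fun _ => mul_assoc _ _ _)
      (fun _ _ _ => lp.ext <| funext fun _ => mul_add _ _ _)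
      (fun _ _ _ => lp.ext <| funext fun _ => mul_left_comm _ _ _))
    1 fun c u => calc
      _ ≤ ‖(‖u‖ : 𝕜) • c‖ := lp.norm_mono two_ne_zero (norm_mul_comp_apply_le k c u)
      _ = 1 * ‖c‖ * ‖u‖ := by
        rw [norm_smul, RCLike.norm_ofReal, abs_norm, one_mul, mul_comm]

@[simp]
lemma weightedComp_apply_apply (c : lp (fun _ : ι => 𝕜) 2) (u : lp (fun _ : κ => 𝕜) 2) (i : ι) :
    weightedComp k c u i = c i * u (k i) := rfl

lemma weightedComp_single [DecidableEq ι] (i : ι) (a : 𝕜) :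
    weightedComp k (lp.single 2 i a)
      = (ContinuousLinearMap.toSpanSingleton 𝕜 (lp.single 2 i a)).comp
          (lp.evalCLM 𝕜 (fun _ : κ => 𝕜) 2 (k i)) := by
  ext u j
  rcases eq_or_ne j i with rfl | hji <;> simp [lp.evalCLM, mul_comm, *]

lemma isCompactOperator_weightedComp_single [DecidableEq ι] (i : ι) (a : 𝕜) :
    IsCompactOperator (weightedComp k (lp.single 2 i a)) := by
  rw [weightedComp_single]
  exact (isCompactOperator_of_locallyCompactSpace_dom
    (lp.evalCLM 𝕜 (fun _ : κ => 𝕜) 2 (k i))).clm_comp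
      (ContinuousLinearMap.toSpanSingleton 𝕜 (lp.single (E := fun _ : ι => 𝕜) 2 i a))

theorem isCompactOperator_weightedComp (c : lp (fun _ : ι => 𝕜) 2) :
    IsCompactOperator (weightedComp k c) := by
  classical
  refine isCompactOperator_of_tendsto
    ((lp.hasSum_single ENNReal.ofNat_ne_top c).map (weightedComp k) (weightedComp k).continuous)
    (.of_forall fun s => ?_)
  show ∑ i ∈ s, weightedComp k (lp.single 2 i (c i))
    ∈ compactOperator (RingHom.id 𝕜) (lp (fun _ : κ => 𝕜) 2) (lp (fun _ : ι => 𝕜) 2)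
  exact Submodule.sum_mem _ fun i _ => isCompactOperator_weightedComp_single k i (c i)

end WeightedComposition

lemma tw_one_right_eq_emb {V : Type*} (m : V → ℝ) : Tw m (fun _ => 1) = emb m := by
  ext f v
  simp [Tw, emb]

lemma tw_one_left_eq_unemb {V : Type*} (m : V → ℝ) : Tw (fun _ => 1) m = unemb m := by
  ext f v
  simp [Tw, unemb, div_eq_inv_mul]

lemma emb_unemb {V : Type*} {m : V → ℝ} (hm : ∀ v, 0 < m v) (g : V → ℂ) :
    emb m (unemb m g) = g := by
  ext v
  have hsqrt : (Real.sqrt (m v) : ℂ) ≠ 0 := by exact_mod_cast (Real.sqrt_pos.2 (hm v)).ne'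
  simp [emb, unemb, mul_div_cancel₀ _ hsqrt]

lemma emb_mul_left {V : Type*} (m : V → ℝ) (x f : V → ℂ) :
    emb m (fun v => x v * f v) = fun v => x v * emb m f v := by
  ext v
  simp only [emb, mul_left_comm]

lemma m1F_pos (n : ℕ) : 0 < m1F n := Real.exp_pos _

lemma aM1F_eq_unemb_aN_emb (f : ℕ → ℂ) : aM1F f = unemb m1F (aN (emb m1F f)) := by
  rw [aM1F, tw_one_right_eq_emb, tw_one_left_eq_unemb]

lemma emb_commOp_unemb (g : ℕ → ℂ) (n : ℕ) :
    emb m1F (commOp (unemb m1F g)) n =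
      Real.exp (-(n : ℝ)) * (I * aN g n) - I * aN (fun k => Real.exp (-(k : ℝ)) * g k) n := by
  have hmul := emb_mul_left m1F (fun k => (Real.exp (-(k : ℝ)) : ℂ)) (unemb m1F g)
  rw [emb_unemb m1F_pos] at hmul
  have hsqrt : (Real.sqrt (m1F n) : ℂ) ≠ 0 := by exact_mod_cast (Real.sqrt_pos.2 (m1F_pos n)).ne'
  rw [emb, commOp, aM1F_eq_unemb_aN_emb, aM1F_eq_unemb_aN_emb, hmul, emb_unemb m1F_pos]
  simp only [unemb]
  field_simp

lemma I_mul_aN (f : ℕ → ℂ) (n : ℕ) :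
    I * aN f n = ((n : ℂ) + 1 / 2) / 2 * f (n + 1)
      - ((n : ℂ) - 1 / 2) / 2 * (if n = 0 then 0 else f (n - 1)) := by
  rw [aN]
  linear_combination
    (((n : ℂ) - 1 / 2) * (if n = 0 then 0 else f (n - 1)) - ((n : ℂ) + 1 / 2) * f (n + 1)) / 2
      * I_mul_I

-- The `if` encodes `f(−1) = 0`: at `n = 0` the truncated `n - 1` is `0`, not `−1`.
def commCoeffPrev (n : ℕ) : ℝ :=
  if n = 0 then 0 else (n - 1 / 2) / 2 * (Real.exp 1 - 1) * Real.exp (-n)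

def commCoeffNext (n : ℕ) : ℝ :=
  (n + 1 / 2) / 2 * (1 - Real.exp (-1)) * Real.exp (-n)

lemma emb_commOp_unemb_eq_shift (g : ℕ → ℂ) (n : ℕ) :
    emb m1F (commOp (unemb m1F g)) n
      = commCoeffPrev n * g (n - 1) + commCoeffNext n * g (n + 1) := by
  have hnext : Real.exp (-((n + 1 : ℕ) : ℝ)) = Real.exp (-1) * Real.exp (-n) := by
    rw [← Real.exp_add]; push_cast; ring_nf
  rw [emb_commOp_unemb, I_mul_aN, I_mul_aN, hnext]
  rcases n with _ | m
  · simp only [commCoeffPrev, commCoeffNext, if_pos]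
    push_cast
    ring
  · have hprev : Real.exp (-(m : ℝ)) = Real.exp 1 * Real.exp (-((m + 1 : ℕ) : ℝ)) := by
      rw [← Real.exp_add]; push_cast; ring_nf
    simp only [commCoeffPrev, commCoeffNext, if_neg m.succ_ne_zero, Nat.add_sub_cancel, hprev]
    push_cast
    ring

lemma memℓp_of_norm_le_succ_mul_exp_neg {E : Type*} [NormedAddCommGroup E] {f : ℕ → E}
    (hf : ∀ n, ‖f n‖ ≤ (n + 1) * Real.exp (-n)) {p : ENNReal} (hp : 1 ≤ p) : Memℓp f p := by
  have hsum : Summable fun n : ℕ => (n + 1) * Real.exp (-n) := by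
    have := (Real.summable_pow_mul_exp_neg_nat_mul 1 one_pos).add Real.summable_exp_neg_nat
    simpa [add_mul] using this
  have hone : Memℓp (fun n : ℕ => (n + 1) * Real.exp (-n)) 1 :=
    memℓp_gen (by simpa [abs_of_nonneg, add_nonneg, Real.exp_nonneg] using hsum)
  exact (hone.mono hf).of_exponent_ge hp

lemma abs_commCoeffPrev_le (n : ℕ) : |commCoeffPrev n| ≤ (n + 1) * Real.exp (-n) := by
  rcases n with _ | m
  · simp [commCoeffPrev]
  · have he : Real.exp 1 < 3 := by linarith [Real.exp_one_lt_d9]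
    have he' : 0 ≤ Real.exp 1 - 1 := by linarith [Real.add_one_le_exp 1]
    have hm : (0 : ℝ) ≤ (m + 1 : ℕ) - 1 / 2 := by push_cast; linarith [m.cast_nonneg (α := ℝ)]
    rw [commCoeffPrev, if_neg m.succ_ne_zero, abs_of_nonneg (by positivity)]
    gcongr
    nlinarith

lemma abs_commCoeffNext_le (n : ℕ) : |commCoeffNext n| ≤ (n + 1) * Real.exp (-n) := by
  have he : 0 ≤ 1 - Real.exp (-1) := by
    linarith [Real.exp_lt_one_iff.2 (neg_one_lt_zero (R := ℝ))]
  rw [commCoeffNext, abs_of_nonneg (by positivity)]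
  gcongr
  nlinarith [Real.exp_pos (-1)]

def commCoeffPrevL2 : L2 ℕ :=
  ⟨fun n => commCoeffPrev n, memℓp_of_norm_le_succ_mul_exp_neg
    (fun n => by simpa using abs_commCoeffPrev_le n) (by norm_num)⟩

def commCoeffNextL2 : L2 ℕ :=
  ⟨fun n => commCoeffNext n, memℓp_of_norm_le_succ_mul_exp_neg
    (fun n => by simpa using abs_commCoeffNext_le n) (by norm_num)⟩

/-- **The commutator `[1/m₁^f(·), iA_{m₁^f}]`, defined on finitely supported
functions, extends to a compact operator on `ℓ²(ℕ, m₁^f)`** (transported by the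
unitary `f ↦ √(m₁^f)·f` to the unweighted `ℓ²(ℕ)`). -/
theorem stmt10 :
    ∃ T : L2 ℕ →L[ℂ] L2 ℕ,
      IsCompactOperator T ∧
      ∀ g : L2 ℕ, (Function.support (g : ℕ → ℂ)).Finite →
        ((T g : ℕ → ℂ) = emb m1F (commOp (unemb m1F g))) := by
  refine ⟨weightedComp (· - 1) commCoeffPrevL2 + weightedComp (· + 1) commCoeffNextL2, ?_,
    fun g _ => ?_⟩
  · rw [FunLike.coe_add]
    exact (isCompactOperator_weightedComp _ _).add (isCompactOperator_weightedComp _ _)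
  funext n
  rw [emb_commOp_unemb_eq_shift, add_apply, lp.coeFn_add, Pi.add_apply,
    weightedComp_apply_apply, weightedComp_apply_apply]
  rfl
end
end

section
/- Let θ > 0 and let V : ℕ×V₂ → ℝ satisfy sup over x₁ ≥ 1 and x₂ ∈ V₂ of ⟨x₁⟩^{1+θ}·|V(x₁−1, x₂) − V(x₁, x₂)| < ∞, where ⟨t⟩ := √(1+t²). Then there exists C > 0 such that for every finitely supported f : ℕ×V₂ → ℂ: ‖⟨Λ^f⟩^{θ}·( V·(i A_{G^f} f) − i A_{G^f}(V·f) )‖_{ℓ²(ℕ×V₂, m^f)} ≤ C·‖f‖_{ℓ²(ℕ×V₂, m^f)}, where V· denotes multiplication by V and ⟨Λ^f⟩^{θ} denotes multiplication by (1 + (x₁ + 1/2)²)^{θ/2} in the first variable. -/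
noncomputable section

open Complex

/-- `A_{G^f} := A_{m₁^f} ⊗ 1`. -/
def aGF {V₂ : Type*} (f : ℕ × V₂ → ℂ) : ℕ × V₂ → ℂ := fun v =>
  aM1F (fun n => f (n, v.2)) v.1

/-- Weight of the funnel: `m^f(x,y) = eˣ·m₂`. -/
def mF (V₂ : Type*) (m₂ : ℝ) : ℕ × V₂ → ℝ := fun v => Real.exp v.1 * m₂

/-- The ℓ²-norm with weight `m`. -/
def nrm {V : Type*} (m : V → ℝ) (f : V → ℂ) : ℝ :=
  Real.sqrt (∑' x : V, m x * ‖f x‖ ^ 2)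

/-- `⟨Λ^f⟩^θ`: multiplication by `(1 + (x₁ + 1/2)²)^{θ/2}` in the first variable. -/
def wLam {V₂ : Type*} (θ : ℝ) (f : ℕ × V₂ → ℂ) : ℕ × V₂ → ℂ := fun v =>
  (((1 + ((v.1 : ℝ) + 1 / 2) ^ 2) ^ (θ / 2) : ℝ) : ℂ) * f v

/-! Conjugation by the gauge `T_{m^f→1}`, a unitary map `ℓ²(m^f) → ℓ²(1)`, turns `A_{G^f}` into
`A_ℕ ⊗ 1`: the exponential weights cancel exactly. In this picture `[W, iA_ℕ]` is the
nearest-neighbour operator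
`u ↦ -½((n - ½)(W n - W (n-1)) u (n-1) - (n + ½)(W n - W (n+1)) u (n+1))`,
and the decay of the differences of `W` is exactly what makes `⟨n + ½⟩^θ` times each of its two
coefficients bounded. An operator with bounded coefficients on the two neighbouring sites is
bounded on `ℓ²`, since both shifts are contractions. -/

def japaneseBracket (t : ℝ) : ℝ := Real.sqrt (1 + t ^ 2)

local notation "⟪" t "⟫" => japaneseBracket t

lemma japaneseBracket_pos (t : ℝ) : 0 < ⟪t⟫ := Real.sqrt_pos.2 (by positivity)

lemma abs_le_japaneseBracket (t : ℝ) : |t| ≤ ⟪t⟫ :=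
  Real.abs_le_sqrt (by nlinarith)

lemma japaneseBracket_le_of_abs_le {s t : ℝ} (h : |s| ≤ |t|) : ⟪s⟫ ≤ ⟪t⟫ :=
  Real.sqrt_le_sqrt (by nlinarith [sq_le_sq.2 h])

lemma one_add_sq_rpow_div_two (t θ : ℝ) : (1 + t ^ 2) ^ (θ / 2) = ⟪t⟫ ^ θ := by
  rw [japaneseBracket, Real.sqrt_eq_rpow, ← Real.rpow_mul (by positivity)]
  ring_nf

lemma rpow_mul_le_rpow_one_add {θ a b c r : ℝ} (hθ : 0 ≤ θ) (ha : 0 ≤ a) (hc : 0 ≤ c)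
    (hab : a ≤ c * b) (hr : 0 ≤ r) (hrb : r ≤ b) : a ^ θ * r ≤ c ^ θ * b ^ (1 + θ) := by
  have hb : 0 ≤ b := hr.trans hrb
  calc a ^ θ * r ≤ (c * b) ^ θ * b := by gcongr
    _ = c ^ θ * b ^ (1 + θ) := by
      rw [Real.mul_rpow hc hb, Real.rpow_add' hb (by linarith), Real.rpow_one]; ring

lemma japaneseBracket_add_half_le (x : ℝ) : ⟪x + 1 / 2⟫ ≤ 2 * ⟪x⟫ := by
  rw [japaneseBracket, japaneseBracket, ← Real.sqrt_sq (zero_le_two : (0:ℝ) ≤ 2),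
    ← Real.sqrt_mul (by norm_num)]
  exact Real.sqrt_le_sqrt (by nlinarith)

lemma abs_sub_half_le_japaneseBracket {x : ℝ} (hx : 0 ≤ x) : |x - 1 / 2| ≤ ⟪x⟫ :=
  Real.abs_le_sqrt (by nlinarith [hx])

def LongRangeBound (θ C : ℝ) (W : ℕ → ℝ) : Prop :=
  ∀ n : ℕ, 1 ≤ n → ⟪n⟫ ^ (1 + θ) * |W (n - 1) - W n| ≤ C

lemma aN_const_mul (c : ℂ) (u : ℕ → ℂ) (n : ℕ) :
    aN (fun k => c * u k) n = c * aN u n := by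
  simp only [aN]; split_ifs <;> ring

lemma aN_commutator (W : ℕ → ℂ) (u : ℕ → ℂ) (n : ℕ) :
    W n * (I * aN u n) - I * aN (fun k => W k * u k) n =
      -(1 / 2) * (((n : ℂ) - 1 / 2) * (W n - W (n - 1)) * (if n = 0 then 0 else u (n - 1))
        - ((n : ℂ) + 1 / 2) * (W n - W (n + 1)) * u (n + 1)) := by
  simp only [aN]
  split_ifs
  · linear_combination (-(1/2) * (((n : ℂ) + 1 / 2) * (W n - W (n + 1)) * u (n + 1))) * I_mul_I
  · linear_combination (1/2 * (((n : ℂ) - 1 / 2) * (W n - W (n - 1)) * u (n - 1)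
      - ((n : ℂ) + 1 / 2) * (W n - W (n + 1)) * u (n + 1))) * I_mul_I

lemma nrm_eq_nrm_Tw_one {V : Type*} {m : V → ℝ} (hm : ∀ x, 0 ≤ m x) (f : V → ℂ) :
    nrm m f = nrm (fun _ => 1) (Tw m (fun _ => 1) f) := by
  simp only [nrm, Tw, div_one, norm_mul, Complex.norm_real, Real.norm_eq_abs,
    abs_of_nonneg (Real.sqrt_nonneg _), mul_pow, Real.sq_sqrt (hm _), one_mul]

lemma Tw_mF_aGF {V₂ : Type*} (m₂ : ℝ) (f : ℕ × V₂ → ℂ) (n : ℕ) (y : V₂) :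
    Tw (mF V₂ m₂) (fun _ => 1) (aGF f) (n, y) =
      aN (fun k => Tw (mF V₂ m₂) (fun _ => 1) f (k, y)) n := by
  have hsplit : ∀ k : ℕ, (Real.sqrt (Real.exp k * m₂ / 1) : ℂ) =
      Real.sqrt m₂ * Real.sqrt (Real.exp k / 1) := fun k => by
    rw [div_one, div_one, Real.sqrt_mul (Real.exp_pos _).le, Complex.ofReal_mul, mul_comm]
  simp only [Tw, aGF, aM1F, mF, m1F, hsplit, mul_assoc, aN_const_mul]
  rw [← mul_assoc (Real.sqrt (Real.exp n / 1) : ℂ), ← Complex.ofReal_mul, ← Real.sqrt_mul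
    (by positivity), div_one, mul_one_div_cancel (Real.exp_pos _).ne', Real.sqrt_one,
    Complex.ofReal_one, one_mul]
  rfl

lemma succ_fst_injective (β : Type*) : Function.Injective (fun v : ℕ × β => (v.1 + 1, v.2)) := by
  rintro ⟨a, b⟩ ⟨c, d⟩ h
  simp_all

lemma ite_pred_eq_zero_of_notMem_range {β : Type*} (h : ℕ × β → ℝ) :
    ∀ v ∉ Set.range (fun v : ℕ × β => (v.1 + 1, v.2)),
      (if v.1 = 0 then 0 else h (v.1 - 1, v.2)) = 0 := by
  rintro ⟨_ | n, y⟩ hv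
  · rfl
  · exact absurd ⟨(n, y), rfl⟩ hv

lemma summable_ite_pred_iff {β : Type*} (h : ℕ × β → ℝ) :
    Summable (fun v : ℕ × β => if v.1 = 0 then 0 else h (v.1 - 1, v.2)) ↔ Summable h := by
  simpa [Function.comp_def] using
    ((succ_fst_injective β).summable_iff (ite_pred_eq_zero_of_notMem_range h)).symm

lemma tsum_ite_pred {β : Type*} (h : ℕ × β → ℝ) :
    ∑' v : ℕ × β, (if v.1 = 0 then 0 else h (v.1 - 1, v.2)) = ∑' v, h v := by
  simpa using ((succ_fst_injective β).tsum_eq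
    (Function.support_subset_iff'.2 (ite_pred_eq_zero_of_notMem_range h))).symm

lemma nrm_one_le_of_norm_le_neighbours {β : Type*} {u g : ℕ × β → ℂ} {K : ℝ} (hK : 0 ≤ K)
    (hu : Summable fun v => ‖u v‖ ^ 2)
    (hg : ∀ n y, ‖g (n, y)‖ ≤ K * ((if n = 0 then 0 else ‖u (n - 1, y)‖) + ‖u (n + 1, y)‖)) :
    nrm (fun _ => 1) g ≤ 2 * K * nrm (fun _ => 1) u := by
  set prev : ℕ × β → ℝ := fun v => if v.1 = 0 then 0 else ‖u (v.1 - 1, v.2)‖ ^ 2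
  set next : ℕ × β → ℝ := fun v => ‖u (v.1 + 1, v.2)‖ ^ 2
  have hprev_summable : Summable prev := (summable_ite_pred_iff (fun v => ‖u v‖ ^ 2)).2 hu
  have hprev : ∑' v, prev v = ∑' v, ‖u v‖ ^ 2 := tsum_ite_pred (fun v => ‖u v‖ ^ 2)
  have hnext_summable : Summable next := hu.comp_injective (succ_fst_injective β)
  have hnext : ∑' v, next v ≤ ∑' v, ‖u v‖ ^ 2 :=
    tsum_comp_le_tsum_of_inj hu (fun _ => by positivity) (succ_fst_injective β)
  have hpoint : ∀ v, ‖g v‖ ^ 2 ≤ 2 * K ^ 2 * (prev v + next v) := by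
    rintro ⟨n, y⟩
    have hprev_sq : prev (n, y) = (if n = 0 then 0 else ‖u (n - 1, y)‖) ^ 2 := by
      simp only [prev]; split_ifs <;> simp
    rw [hprev_sq]
    calc ‖g (n, y)‖ ^ 2
        ≤ (K * ((if n = 0 then 0 else ‖u (n - 1, y)‖) + ‖u (n + 1, y)‖)) ^ 2 :=
          pow_le_pow_left₀ (norm_nonneg _) (hg n y) 2
      _ ≤ _ := by nlinarith [sq_nonneg ((if n = 0 then 0 else ‖u (n - 1, y)‖) - ‖u (n + 1, y)‖)]
  have hsum : ∑' v, ‖g v‖ ^ 2 ≤ (2 * K) ^ 2 * ∑' v, ‖u v‖ ^ 2 := by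
    have hdom : Summable fun v => 2 * K ^ 2 * (prev v + next v) :=
      (hprev_summable.add hnext_summable).mul_left _
    calc ∑' v, ‖g v‖ ^ 2 ≤ ∑' v, 2 * K ^ 2 * (prev v + next v) :=
          (Summable.of_nonneg_of_le (fun _ => by positivity) hpoint hdom).tsum_le_tsum hpoint hdom
      _ = 2 * K ^ 2 * (∑' v, prev v + ∑' v, next v) := by
          rw [tsum_mul_left, hprev_summable.tsum_add hnext_summable]
      _ ≤ (2 * K) ^ 2 * ∑' v, ‖u v‖ ^ 2 := by rw [hprev]; nlinarith
  simp only [nrm, one_mul]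
  rw [← Real.sqrt_sq (by positivity : 0 ≤ 2 * K), ← Real.sqrt_mul (sq_nonneg _)]
  exact Real.sqrt_le_sqrt hsum

lemma commutator_prev_coeff_le {θ C : ℝ} (hθ : 0 ≤ θ) {W : ℕ → ℝ}
    (hW : LongRangeBound θ C W) {n : ℕ} (hn : 1 ≤ n) :
    ⟪n + 1 / 2⟫ ^ θ * (|(n : ℝ) - 1 / 2| * |W n - W (n - 1)|) ≤ 2 ^ θ * C := by
  have hcoeff : ⟪n + 1 / 2⟫ ^ θ * |(n : ℝ) - 1 / 2| ≤ 2 ^ θ * ⟪n⟫ ^ (1 + θ) :=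
    rpow_mul_le_rpow_one_add hθ (japaneseBracket_pos _).le zero_le_two
      (japaneseBracket_add_half_le _) (abs_nonneg _)
      (abs_sub_half_le_japaneseBracket n.cast_nonneg)
  calc ⟪n + 1 / 2⟫ ^ θ * (|(n : ℝ) - 1 / 2| * |W n - W (n - 1)|)
      = (⟪n + 1 / 2⟫ ^ θ * |(n : ℝ) - 1 / 2|) * |W (n - 1) - W n| := by
        rw [abs_sub_comm (W n)]; ring
    _ ≤ 2 ^ θ * ⟪n⟫ ^ (1 + θ) * |W (n - 1) - W n| := by gcongr
    _ ≤ 2 ^ θ * C := by rw [mul_assoc]; gcongr; exact hW n hn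

lemma commutator_next_coeff_le {θ C : ℝ} (hθ : 0 ≤ θ) {W : ℕ → ℝ}
    (hW : LongRangeBound θ C W) (n : ℕ) :
    ⟪n + 1 / 2⟫ ^ θ * (((n : ℝ) + 1 / 2) * |W n - W (n + 1)|) ≤ C := by
  have hmono : ⟪n + 1 / 2⟫ ≤ ⟪(n + 1 : ℕ)⟫ := japaneseBracket_le_of_abs_le (by
    rw [abs_of_nonneg (by positivity), abs_of_nonneg (by positivity)]; push_cast; linarith)
  have hcoeff : ⟪n + 1 / 2⟫ ^ θ * ((n : ℝ) + 1 / 2) ≤ 1 ^ θ * ⟪(n + 1 : ℕ)⟫ ^ (1 + θ) :=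
    rpow_mul_le_rpow_one_add hθ (japaneseBracket_pos _).le zero_le_one (by rwa [one_mul])
      (by positivity) ((le_abs_self _).trans ((abs_le_japaneseBracket _).trans hmono))
  rw [Real.one_rpow, one_mul] at hcoeff
  calc ⟪n + 1 / 2⟫ ^ θ * (((n : ℝ) + 1 / 2) * |W n - W (n + 1)|)
      = (⟪n + 1 / 2⟫ ^ θ * ((n : ℝ) + 1 / 2)) * |W (n + 1 - 1) - W (n + 1)| := by
        rw [Nat.add_sub_cancel]; ring
    _ ≤ ⟪(n + 1 : ℕ)⟫ ^ (1 + θ) * |W (n + 1 - 1) - W (n + 1)| := by gcongr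
    _ ≤ C := hW (n + 1) le_add_self

lemma norm_weighted_commutator_aN_le {θ C : ℝ} (hθ : 0 ≤ θ) {W : ℕ → ℝ}
    (hW : LongRangeBound θ C W) (u : ℕ → ℂ) (n : ℕ) :
    ⟪n + 1 / 2⟫ ^ θ * ‖(W n : ℂ) * (I * aN u n) - I * aN (fun k => (W k : ℂ) * u k) n‖
      ≤ 2 ^ θ * C / 2 * ((if n = 0 then 0 else ‖u (n - 1)‖) + ‖u (n + 1)‖) := by
  have hC : 0 ≤ C :=
    (mul_nonneg (Real.rpow_nonneg (japaneseBracket_pos _).le _) (abs_nonneg _)).trans (hW 1 le_rfl)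
  have hw : 0 ≤ ⟪n + 1 / 2⟫ ^ θ := Real.rpow_nonneg (japaneseBracket_pos _).le _
  have hdiff : ∀ a b : ℕ, ‖(W a : ℂ) - W b‖ = |W a - W b| := fun a b => by
    rw [← Complex.ofReal_sub, Complex.norm_real, Real.norm_eq_abs]
  have hprev : ⟪n + 1 / 2⟫ ^ θ * ‖((n : ℂ) - 1 / 2) * ((W n : ℂ) - W (n - 1)) *
      (if n = 0 then 0 else u (n - 1))‖ ≤ 2 ^ θ * C * (if n = 0 then 0 else ‖u (n - 1)‖) := by
    rcases Nat.eq_zero_or_pos n with rfl | hn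
    · simp
    have hcast : ‖(n : ℂ) - 1 / 2‖ = |(n : ℝ) - 1 / 2| := by
      rw [← Real.norm_eq_abs, ← Complex.norm_real]; push_cast; rfl
    rw [if_neg hn.ne', if_neg hn.ne', norm_mul, norm_mul, hcast, hdiff, ← mul_assoc]
    exact mul_le_mul_of_nonneg_right (commutator_prev_coeff_le hθ hW hn) (norm_nonneg _)
  have hnext : ⟪n + 1 / 2⟫ ^ θ * ‖((n : ℂ) + 1 / 2) * ((W n : ℂ) - W (n + 1)) * u (n + 1)‖
      ≤ 2 ^ θ * C * ‖u (n + 1)‖ := by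
    have hcast : ‖(n : ℂ) + 1 / 2‖ = (n : ℝ) + 1 / 2 := by
      rw [← abs_of_nonneg (by positivity : (0 : ℝ) ≤ n + 1 / 2), ← Real.norm_eq_abs,
        ← Complex.norm_real]; push_cast; rfl
    rw [norm_mul, norm_mul, hcast, hdiff, ← mul_assoc]
    refine mul_le_mul_of_nonneg_right ((commutator_next_coeff_le hθ hW n).trans ?_) (norm_nonneg _)
    exact le_mul_of_one_le_left hC (Real.one_le_rpow one_le_two hθ)
  rw [aN_commutator (fun k => (W k : ℂ)), norm_mul, norm_neg]
  calc ⟪n + 1 / 2⟫ ^ θ * (‖(1 / 2 : ℂ)‖ * ‖_ - _‖)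
      ≤ ⟪n + 1 / 2⟫ ^ θ * (1 / 2 * (‖((n : ℂ) - 1 / 2) * ((W n : ℂ) - W (n - 1)) *
          (if n = 0 then 0 else u (n - 1))‖ +
          ‖((n : ℂ) + 1 / 2) * ((W n : ℂ) - W (n + 1)) * u (n + 1)‖)) := by
        gcongr
        · norm_num
        · exact norm_sub_le _ _
    _ ≤ _ := by linarith

lemma Tw_mF_wLam_commutator {V₂ : Type*} (m₂ θ : ℝ) (W : ℕ × V₂ → ℝ) (f : ℕ × V₂ → ℂ)
    (n : ℕ) (y : V₂) :
    Tw (mF V₂ m₂) (fun _ => 1) (wLam θ (fun v =>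
        (W v : ℂ) * (I * aGF f v) - I * aGF (fun w => (W w : ℂ) * f w) v)) (n, y) =
      (⟪n + 1 / 2⟫ ^ θ : ℝ) *
        ((W (n, y) : ℂ) * (I * aN (fun k => Tw (mF V₂ m₂) (fun _ => 1) f (k, y)) n)
          - I * aN (fun k => (W (k, y) : ℂ) * Tw (mF V₂ m₂) (fun _ => 1) f (k, y)) n) := by
  have hWf : (fun k => (W (k, y) : ℂ) * Tw (mF V₂ m₂) (fun _ => 1) f (k, y)) =
      fun k => Tw (mF V₂ m₂) (fun _ => 1) (fun w => (W w : ℂ) * f w) (k, y) :=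
    funext fun _ => mul_left_comm _ _ _
  rw [hWf, ← Tw_mF_aGF, ← Tw_mF_aGF]
  simp only [Tw, wLam, one_add_sq_rpow_div_two]
  ring

theorem stmt18_general {V₂ : Type*} (m₂ : ℝ) (hm₂ : 0 < m₂)
    (θ : ℝ) (hθ : 0 < θ) (W : ℕ × V₂ → ℝ)
    (hW : ∃ C₀ : ℝ, ∀ x₁ : ℕ, 1 ≤ x₁ → ∀ x₂ : V₂,
      Real.sqrt (1 + (x₁ : ℝ) ^ 2) ^ (1 + θ) * |W (x₁ - 1, x₂) - W (x₁, x₂)| ≤ C₀) :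
    ∃ C > 0, ∀ f : ℕ × V₂ → ℂ, (Function.support f).Finite →
      nrm (mF V₂ m₂) (wLam θ (fun v =>
          (W v : ℂ) * (I * aGF f v) - I * aGF (fun w => (W w : ℂ) * f w) v))
        ≤ C * nrm (mF V₂ m₂) f := by
  obtain ⟨C₀, hC₀⟩ := hW
  have hC : ∀ y, LongRangeBound θ (max C₀ 1) (fun k => W (k, y)) :=
    fun y n hn => (hC₀ n hn y).trans (le_max_left _ _)
  refine ⟨2 ^ θ * max C₀ 1, by positivity, fun f hf => ?_⟩
  have hmF : ∀ v, 0 ≤ mF V₂ m₂ v := fun v => mul_nonneg (Real.exp_pos _).le hm₂.le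
  have hu : Summable fun v => ‖Tw (mF V₂ m₂) (fun _ => 1) f v‖ ^ 2 :=
    summable_of_hasFiniteSupport (hf.subset fun v hv h => hv (by simp [Tw, h]))
  rw [nrm_eq_nrm_Tw_one hmF, nrm_eq_nrm_Tw_one hmF]
  calc _ ≤ 2 * (2 ^ θ * max C₀ 1 / 2) * nrm (fun _ => 1) (Tw (mF V₂ m₂) (fun _ => 1) f) :=
        nrm_one_le_of_norm_le_neighbours (by positivity) hu fun n y => ?_
    _ = _ := by ring
  rw [Tw_mF_wLam_commutator, norm_mul, Complex.norm_real, Real.norm_eq_abs,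
    abs_of_nonneg (Real.rpow_nonneg (japaneseBracket_pos _).le _)]
  exact norm_weighted_commutator_aN_le hθ.le (hC y) _ n

/-- **Weighted bound for the commutator `[V(·), iA_{G^f}]`:** if the potential `V`
has long-range decay `⟨x₁⟩^{1+θ}·|V(x₁−1,x₂) − V(x₁,x₂)|` bounded, then
`⟨Λ^f⟩^θ [V, iA_{G^f}]` is bounded on `ℓ²(ℕ×V₂, m^f)`. -/
theorem stmt18 {V₂ : Type*} [Fintype V₂] (m₂ : ℝ) (hm₂ : 0 < m₂)
    (θ : ℝ) (hθ : 0 < θ) (W : ℕ × V₂ → ℝ)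
    (hW : ∃ C₀ : ℝ, ∀ x₁ : ℕ, 1 ≤ x₁ → ∀ x₂ : V₂,
      Real.sqrt (1 + (x₁ : ℝ) ^ 2) ^ (1 + θ) * |W (x₁ - 1, x₂) - W (x₁, x₂)| ≤ C₀) :
    ∃ C > 0, ∀ f : ℕ × V₂ → ℂ, (Function.support f).Finite →
      nrm (mF V₂ m₂) (wLam θ (fun v =>
          (W v : ℂ) * (I * aGF f v) - I * aGF (fun w => (W w : ℂ) * f w) v))
        ≤ C * nrm (mF V₂ m₂) f :=
  stmt18_general m₂ hm₂ θ hθ W hW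
end
end
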